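/- Fix N ≥ 1, M ≥ 1 and a nondecreasing discrete concave function g : ℤ⁺⁺ → ℝ with g(0) = 0 (where ℤ⁺⁺ includes 0). Among all rate allocations (r₁,…,r_N) ∈ (ℤ⁺⁺)^N with ∑ r_n ≤ N·M, the maximum of ∑_n g(r_n) equals N·g(M). -/
import Mathlib


/-- With `g(0) = 0` (inactive sensor), `g` nondecreasing and discrete concave on
`ℤ⁺⁺`, the maximum of `∑ g(rₙ)` over all allocations `(r₁,…,r_N) ∈ (ℤ⁺⁺)^N` with
`∑ rₙ ≤ N·M` equals `N·g(M)`. -/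
theorem uniform_allocation_is_max
    (g : ℕ → ℝ) (hg0 : g 0 = 0)
    (hmono : Monotone g)
    (hconc : ∀ k : ℕ, 1 ≤ k → g (k - 1) + g (k + 1) ≤ 2 * g k)
    (N M : ℕ) (hN : 1 ≤ N) (hM : 1 ≤ M) :
    IsGreatest
      {s : ℝ | ∃ r : Fin N → ℕ, (∑ n, r n ≤ N * M) ∧ s = ∑ n, g (r n)}
      ((N : ℝ) * g M) := by
  constructor
  · refine ⟨fun _ => M, ?_, ?_⟩
    · simp [Finset.sum_const, Finset.card_univ, mul_comm]
    · simp [Finset.sum_const, Finset.card_univ, mul_comm]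
  · rintro s ⟨r, hr, rfl⟩
    set c := g (M + 1) - g M with hc
    have hΔanti : Antitone (fun k => g (k + 1) - g k) := by
      apply antitone_nat_of_succ_le
      intro k
      have h := hconc (k + 1) (by omega)
      simp only [Nat.add_sub_cancel] at h
      linarith
    have hc0 : 0 ≤ c := sub_nonneg.2 (hmono (Nat.le_succ M))
    have up : ∀ n : ℕ, g (M + n) ≤ g M + c * n := by
      intro n
      induction n with
      | zero => simp
      | succ n ih =>
        have hΔ : g (M + n + 1) - g (M + n) ≤ c := hΔanti (Nat.le_add_right M n)
        push_cast
        push_cast at ih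
        have : M + (n + 1) = (M + n) + 1 := by omega
        rw [this]
        linarith
    have down : ∀ n : ℕ, n ≤ M → c * n ≤ g M - g (M - n) := by
      intro n hn
      induction n with
      | zero => simp
      | succ n ih =>
        have ih' := ih (by omega)
        have hstep : M - n = (M - (n + 1)) + 1 := by omega
        have hΔ : c ≤ g ((M - (n + 1)) + 1) - g (M - (n + 1)) :=
          hΔanti (by omega)
        rw [← hstep] at hΔ
        push_cast
        push_cast at ih'
        linarith
    have key : ∀ b : ℕ, g b ≤ g M + c * ((b : ℝ) - M) := by
      intro b
      rcases le_or_gt M b with h | h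
      · obtain ⟨n, rfl⟩ := Nat.exists_eq_add_of_le h
        have := up n
        have : ((M + n : ℕ) : ℝ) - M = n := by push_cast; ring
        rw [this]
        exact up n
      · have h1 := down (M - b) (by omega)
        have hb : M - (M - b) = b := by omega
        rw [hb] at h1
        have h2 : ((M - b : ℕ) : ℝ) = (M : ℝ) - b := by
          have : (b : ℝ) ≤ M := by exact_mod_cast h.le
          push_cast [Nat.cast_sub h.le]
          ring
        rw [h2] at h1
        nlinarith
    have hsum : ∑ n, g (r n) ≤ ∑ n : Fin N, (g M + c * ((r n : ℝ) - M)) :=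
      Finset.sum_le_sum fun i _ => key (r i)
    have hrc : (∑ n, (r n : ℝ)) ≤ (N : ℝ) * M := by
      have : ((∑ n, r n : ℕ) : ℝ) ≤ ((N * M : ℕ) : ℝ) := by exact_mod_cast hr
      push_cast at this
      simpa using this
    have hexp : ∑ n : Fin N, (g M + c * ((r n : ℝ) - M))
        = (N : ℝ) * g M + c * ((∑ n, (r n : ℝ)) - (N : ℝ) * M) := by
      rw [Finset.sum_add_distrib, ← Finset.mul_sum, Finset.sum_sub_distrib]
      simp [Finset.sum_const, Finset.card_univ]
    rw [hexp] at hsum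
    nlinarith
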